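/- arXiv:2406.06306 — 2 statements merged into one kernel-verified Lean document; each statement's English description precedes it below -/
import Mathlib

section
/- Let μ and μ' be probability vectors on [n] with μ'_i = μ_i(1+ε_i), |ε_i| ≤ ε ≤ 1, and μ_min = min_i μ_i > 0. Let D, D' be the N×n block indicator matrices for block sizes μ_i N and μ'_i N (both assumed integral), and V = (1/√N) D M^{-1/2}, V' = (1/√N) D' M'^{-1/2} the associated isometries. Then ‖V − V'‖_op ≤ √(3n/μ_min) · √ε. -/
open scoped BigOperators
open Matrix

/-- The `N × n` block indicator matrix. -/
def blockD (N n : ℕ) (k : Fin n → ℕ) : Matrix (Fin N) (Fin n) ℝ :=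
  Matrix.of fun r j =>
    if (∑ i : Fin n, if (i : ℕ) < (j : ℕ) then k i else 0) ≤ (r : ℕ) ∧
        (r : ℕ) < (∑ i : Fin n, if (i : ℕ) < (j : ℕ) then k i else 0) + k j
    then 1 else 0

/-- The `ℓ² → ℓ²` operator norm of a real matrix. -/
noncomputable def opNorm {m n : ℕ} (A : Matrix (Fin m) (Fin n) ℝ) : ℝ :=
  ‖LinearMap.toContinuousLinearMap (Matrix.toEuclideanLin A)‖

/-!
Column `j` of `V` is the unit vector `1_A / √|A|` of the `j`-th block `A = [s_j, s_j + k_j)`,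
and column `j` of `V'` is `1_B / √|B|` for the `j`-th perturbed block `B`. Bounding the operator
norm by the Frobenius norm, column `j` contributes `2 - 2|A ∩ B| / √(|A||B|)`, which is at most
`2 (max(|A|,|B|) - |A ∩ B|) / |A|` because `√(|A||B|) ≤ max(|A|,|B|)`. For two intervals this
deficit is at most the difference of their lengths plus the difference of their left endpoints,
and since `|k_i - k'_i| ≤ ε k_i` that is at most `ε ∑_{i ≤ j} k_i ≤ ε N`. So every column
contributes at most `2ε / μ_j ≤ 2ε / μ_min`.
-/

open Finset

lemma opNorm_le_sqrt_sum_sq {m n : ℕ} (A : Matrix (Fin m) (Fin n) ℝ) :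
    opNorm A ≤ √(∑ j, ∑ r, A r j ^ 2) := by
  refine ContinuousLinearMap.opNorm_le_bound _ (Real.sqrt_nonneg _) fun x => ?_
  rw [LinearMap.coe_toContinuousLinearMap', EuclideanSpace.norm_eq, EuclideanSpace.norm_eq,
    ← Real.sqrt_mul (by positivity)]
  refine Real.sqrt_le_sqrt ?_
  simp only [Real.norm_eq_abs, sq_abs]
  calc ∑ r, (∑ j, A r j * x j) ^ 2 ≤ ∑ r, (∑ j, A r j ^ 2) * ∑ j, x j ^ 2 :=
        sum_le_sum fun r _ => sum_mul_sq_le_sq_mul_sq _ _ _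
    _ = (∑ j, ∑ r, A r j ^ 2) * ∑ j, x j ^ 2 := by rw [← sum_mul, sum_comm]

def blockStart {n : ℕ} (k : Fin n → ℕ) (j : Fin n) : ℕ := ∑ i ∈ Iio j, k i

def block {n : ℕ} (k : Fin n → ℕ) (j : Fin n) : Finset ℕ :=
  Ico (blockStart k j) (blockStart k j + k j)

lemma blockD_apply (N n : ℕ) (k : Fin n → ℕ) (r : Fin N) (j : Fin n) :
    blockD N n k r j = if (r : ℕ) ∈ block k j then 1 else 0 := by
  have hstart : (∑ i : Fin n, if (i : ℕ) < (j : ℕ) then k i else 0) = blockStart k j := by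
    rw [blockStart, ← sum_filter]
    congr 1
    ext i
    simp
  simp only [blockD, block, of_apply, mem_Ico, hstart]

lemma blockStart_add_self {n : ℕ} (k : Fin n → ℕ) (j : Fin n) :
    blockStart k j + k j = ∑ i ∈ Iic j, k i := by
  rw [blockStart, ← Iio_insert, sum_insert notMem_Iio_self, add_comm]

lemma block_subset_range {N n : ℕ} {k : Fin n → ℕ} (hk : ∑ i, k i = N) (j : Fin n) :
    block k j ⊆ range N := by
  intro r hr
  rw [block, mem_Ico, blockStart_add_self] at hr
  rw [mem_range, ← hk]
  exact hr.2.trans_le (sum_le_sum_of_subset (subset_univ _))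

lemma card_block {n : ℕ} (k : Fin n → ℕ) (j : Fin n) : #(block k j) = k j := by
  simp [block]

noncomputable def normBlockD (N n : ℕ) (k : Fin n → ℕ) : Matrix (Fin N) (Fin n) ℝ :=
  blockD N n k * diagonal fun i => (√(k i))⁻¹

lemma normBlockD_apply (N n : ℕ) (k : Fin n → ℕ) (r : Fin N) (j : Fin n) :
    normBlockD N n k r j = if (r : ℕ) ∈ block k j then (√(k j))⁻¹ else 0 := by
  simp [normBlockD, mul_diagonal, blockD_apply]

lemma smul_blockD_mul_diagonal_eq_normBlockD {N n : ℕ} {k : Fin n → ℕ} {μ : Fin n → ℝ}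
    (hk : ∀ i, (k i : ℝ) = μ i * N) :
    (√N)⁻¹ • (blockD N n k * diagonal fun i => (√(μ i))⁻¹) = normBlockD N n k := by
  ext r j
  simp only [normBlockD, Matrix.smul_apply, mul_diagonal, smul_eq_mul, hk, mul_comm (μ j),
    Real.sqrt_mul (Nat.cast_nonneg N), mul_inv]
  ring

lemma sum_sq_ite_mem_sub_ite_mem {N : ℕ} {A B : Finset ℕ} (hA : A ⊆ range N)
    (hB : B ⊆ range N) (a b : ℝ) :
    ∑ r : Fin N, ((if (r : ℕ) ∈ A then a else 0) - if (r : ℕ) ∈ B then b else 0) ^ 2 =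
      #A * a ^ 2 + #B * b ^ 2 - 2 * #(A ∩ B) * (a * b) := by
  have hsq : ∀ r : ℕ, ((if r ∈ A then a else 0) - if r ∈ B then b else 0) ^ 2 =
      (if r ∈ A then a ^ 2 else 0) + (if r ∈ B then b ^ 2 else 0) -
        2 * if r ∈ A ∩ B then a * b else 0 := by
    intro r
    by_cases hrA : r ∈ A <;> by_cases hrB : r ∈ B <;> simp [hrA, hrB]; ring
  rw [Fin.sum_univ_eq_sum_range
    (fun r => ((if r ∈ A then a else 0) - if r ∈ B then b else 0) ^ 2)]
  simp only [hsq, sum_sub_distrib, sum_add_distrib, ← mul_sum, sum_ite_mem, sum_const,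
    nsmul_eq_mul, inter_eq_right.2 hA, inter_eq_right.2 hB,
    inter_eq_right.2 (inter_subset_left.trans hA)]
  ring

lemma sum_sq_normalized_indicator_sub {N : ℕ} {A B : Finset ℕ} (hA : A ⊆ range N)
    (hB : B ⊆ range N) (hA₀ : A.Nonempty) (hB₀ : B.Nonempty) :
    ∑ r : Fin N, ((if (r : ℕ) ∈ A then (√(#A : ℝ))⁻¹ else 0) -
        if (r : ℕ) ∈ B then (√(#B : ℝ))⁻¹ else 0) ^ 2 =
      2 - 2 * #(A ∩ B) / √(#A * #B) := by
  have hA' : (0 : ℝ) < #A := by exact_mod_cast hA₀.card_pos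
  have hB' : (0 : ℝ) < #B := by exact_mod_cast hB₀.card_pos
  rw [sum_sq_ite_mem_sub_ite_mem hA hB, inv_pow, inv_pow, Real.sq_sqrt hA'.le,
    Real.sq_sqrt hB'.le, ← mul_inv, ← Real.sqrt_mul hA'.le]
  field_simp
  ring

lemma two_sub_two_mul_div_sqrt_le {a b c : ℝ} (ha : 0 < a) (hb : 0 < b) (hc : 0 ≤ c) :
    2 - 2 * c / √(a * b) ≤ 2 * (max a b - c) / max a b := by
  have hmax : 0 < max a b := lt_max_of_lt_left ha
  have hsqrt : √(a * b) ≤ max a b :=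
    Real.sqrt_le_iff.2 ⟨hmax.le, by nlinarith [le_max_left a b, le_max_right a b]⟩
  calc 2 - 2 * c / √(a * b) ≤ 2 - 2 * c / max a b := by gcongr
    _ = 2 * (max a b - c) / max a b := by field_simp

lemma max_sub_card_Ico_inter_Ico_le (s a s' b : ℕ) :
    (max a b : ℝ) - #(Ico s (s + a) ∩ Ico s' (s' + b)) ≤ |(a : ℝ) - b| + |(s : ℝ) - s'| := by
  rw [Ico_inter_Ico, Nat.card_Ico, ← max_sub_min_eq_abs', ← max_sub_min_eq_abs']
  have key : max a b + min a b + min s s' ≤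
      (min (s + a) (s' + b) - max s s') + max a b + max s s' := by omega
  have hcast := (Nat.cast_le (α := ℝ)).2 key
  push_cast at hcast
  linarith

lemma abs_sub_add_abs_blockStart_sub_le {n : ℕ} {k k' : Fin n → ℕ} {ε : ℝ}
    (hkk' : ∀ i, |(k i : ℝ) - k' i| ≤ ε * k i) (j : Fin n) :
    |(k j : ℝ) - k' j| + |(blockStart k j : ℝ) - blockStart k' j| ≤
      ε * ∑ i ∈ Iic j, (k i : ℝ) := by
  have hstart : |(blockStart k j : ℝ) - blockStart k' j| ≤ ε * ∑ i ∈ Iio j, (k i : ℝ) := by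
    simp only [blockStart, Nat.cast_sum, ← sum_sub_distrib, mul_sum]
    exact (abs_sum_le_sum_abs _ _).trans (sum_le_sum fun i _ => hkk' i)
  rw [← Iio_insert, sum_insert notMem_Iio_self, mul_add]
  linarith [hkk' j]

lemma abs_sub_mul_one_add_le {x t ε : ℝ} (hx : 0 ≤ x) (ht : |t| ≤ ε) :
    |x - x * (1 + t)| ≤ ε * x := by
  rw [mul_one_add, sub_add_cancel_left, abs_neg, abs_mul, abs_of_nonneg hx, mul_comm]
  exact mul_le_mul_of_nonneg_right ht hx

lemma sum_sq_normBlockD_sub_le {N n : ℕ} {k k' : Fin n → ℕ} {ε : ℝ}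
    (hkpos : ∀ i, 0 < k i) (hk'pos : ∀ i, 0 < k' i)
    (hksum : ∑ i, k i = N) (hk'sum : ∑ i, k' i = N)
    (hkk' : ∀ i, |(k i : ℝ) - k' i| ≤ ε * k i) (j : Fin n) :
    ∑ r, (normBlockD N n k - normBlockD N n k') r j ^ 2 ≤ 2 * (ε * N) / k j := by
  have hA : (block k j).Nonempty := by
    rw [← card_pos, card_block]; exact hkpos j
  have hB : (block k' j).Nonempty := by
    rw [← card_pos, card_block]; exact hk'pos j
  have hkj : (0 : ℝ) < k j := by exact_mod_cast hkpos j
  have hk'j : (0 : ℝ) < k' j := by exact_mod_cast hk'pos j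
  have hε : 0 ≤ ε := nonneg_of_mul_nonneg_left ((abs_nonneg _).trans (hkk' j)) hkj
  have hmismatch : max (k j : ℝ) (k' j) - #(block k j ∩ block k' j) ≤ ε * N := by
    calc max (k j : ℝ) (k' j) - #(block k j ∩ block k' j)
        ≤ |(k j : ℝ) - k' j| + |(blockStart k j : ℝ) - blockStart k' j| :=
          max_sub_card_Ico_inter_Ico_le _ _ _ _
      _ ≤ ε * ∑ i ∈ Iic j, (k i : ℝ) := abs_sub_add_abs_blockStart_sub_le hkk' j
      _ ≤ ε * ∑ i, (k i : ℝ) := by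
          gcongr
          exact subset_univ _
      _ = ε * N := by rw [← hksum, Nat.cast_sum]
  have hcol := sum_sq_normalized_indicator_sub (block_subset_range hksum j)
    (block_subset_range hk'sum j) hA hB
  rw [card_block, card_block] at hcol
  simp only [Matrix.sub_apply, normBlockD_apply, hcol]
  calc 2 - 2 * #(block k j ∩ block k' j) / √(k j * k' j)
      ≤ 2 * (max (k j : ℝ) (k' j) - #(block k j ∩ block k' j)) / max (k j : ℝ) (k' j) :=
        two_sub_two_mul_div_sqrt_le hkj hk'j (Nat.cast_nonneg _)
    _ ≤ 2 * (ε * N) / k j := by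
        gcongr
        exact le_max_left _ _

theorem V_perturbation_bound_general (N n : ℕ)
    (μ μ' : Fin n → ℝ)
    (ε : ℝ) (εi : Fin n → ℝ) (hεi : ∀ i, |εi i| ≤ ε)
    (hμ' : ∀ i, μ' i = μ i * (1 + εi i))
    (k k' : Fin n → ℕ) (hkpos : ∀ i, 0 < k i) (hk'pos : ∀ i, 0 < k' i)
    (hk : ∀ i, (k i : ℝ) = μ i * N) (hk' : ∀ i, (k' i : ℝ) = μ' i * N)
    (hksum : ∑ i, k i = N) (hk'sum : ∑ i, k' i = N)
    (μmin : ℝ) (hμmin : IsLeast (Set.range μ) μmin)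
    (V V' : Matrix (Fin N) (Fin n) ℝ)
    (hV : V = (Real.sqrt N)⁻¹ •
        (blockD N n k * Matrix.diagonal fun i => (Real.sqrt (μ i))⁻¹))
    (hV' : V' = (Real.sqrt N)⁻¹ •
        (blockD N n k' * Matrix.diagonal fun i => (Real.sqrt (μ' i))⁻¹)) :
    opNorm (V - V') ≤ Real.sqrt (3 * n / μmin) * Real.sqrt ε := by
  obtain ⟨⟨i₀, rfl⟩, hmin⟩ := hμmin
  have hN : (0 : ℝ) < N := by
    rw [← hksum, Nat.cast_pos]
    exact (hkpos i₀).trans_le (single_le_sum (fun i _ => Nat.zero_le (k i)) (mem_univ i₀))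
  have hμ : ∀ i, 0 < μ i := fun i =>
    (mul_pos_iff_of_pos_right hN).1 (hk i ▸ Nat.cast_pos.2 (hkpos i))
  have hε : 0 ≤ ε := (abs_nonneg _).trans (hεi i₀)
  have hkk' : ∀ i, |(k i : ℝ) - k' i| ≤ ε * k i := fun i => by
    rw [hk', hμ', mul_right_comm, ← hk]
    exact abs_sub_mul_one_add_le (Nat.cast_nonneg _) (hεi i)
  have hcol : ∀ j, ∑ r, (normBlockD N n k - normBlockD N n k') r j ^ 2 ≤ 2 * ε / μ i₀ := by
    intro j
    calc ∑ r, (normBlockD N n k - normBlockD N n k') r j ^ 2 ≤ 2 * (ε * N) / k j :=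
          sum_sq_normBlockD_sub_le hkpos hk'pos hksum hk'sum hkk' j
      _ = 2 * ε / μ j := by rw [hk]; field_simp
      _ ≤ 2 * ε / μ i₀ := by
          gcongr
          · exact hμ i₀
          · exact hmin ⟨j, rfl⟩
  rw [hV, hV', smul_blockD_mul_diagonal_eq_normBlockD hk,
    smul_blockD_mul_diagonal_eq_normBlockD hk',
    ← Real.sqrt_mul (div_nonneg (by positivity) (hμ i₀).le)]
  refine (opNorm_le_sqrt_sum_sq _).trans (Real.sqrt_le_sqrt ?_)
  calc ∑ j, ∑ r, (normBlockD N n k - normBlockD N n k') r j ^ 2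
      ≤ ∑ _j : Fin n, 2 * ε / μ i₀ := sum_le_sum fun j _ => hcol j
    _ ≤ 3 * n / μ i₀ * ε := by
      rw [sum_const, card_univ, Fintype.card_fin, nsmul_eq_mul, mul_div_assoc', div_mul_eq_mul_div]
      gcongr ?_ / _
      · exact (hμ i₀).le
      · nlinarith [mul_nonneg (Nat.cast_nonneg n : (0 : ℝ) ≤ n) hε]

/-- if `μ'_i = μ_i (1 + ε_i)` with `|ε_i| ≤ ε ≤ 1`, then the isometries
`V = (1/√N) D M^{-1/2}` and `V' = (1/√N) D' M'^{-1/2}` satisfy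
`‖V - V'‖_op ≤ √(3n/μ_min) √ε`. -/
theorem V_perturbation_bound (N n : ℕ) (hN : 0 < N) (hn : 0 < n)
    (μ μ' : Fin n → ℝ) (hμpos : ∀ i, 0 < μ i) (hμ'pos : ∀ i, 0 < μ' i)
    (hμsum : ∑ i, μ i = 1) (hμ'sum : ∑ i, μ' i = 1)
    (ε : ℝ) (hε1 : ε ≤ 1) (εi : Fin n → ℝ) (hεi : ∀ i, |εi i| ≤ ε)
    (hμ' : ∀ i, μ' i = μ i * (1 + εi i))
    (k k' : Fin n → ℕ) (hkpos : ∀ i, 0 < k i) (hk'pos : ∀ i, 0 < k' i)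
    (hk : ∀ i, (k i : ℝ) = μ i * N) (hk' : ∀ i, (k' i : ℝ) = μ' i * N)
    (hksum : ∑ i, k i = N) (hk'sum : ∑ i, k' i = N)
    (μmin : ℝ) (hμmin : IsLeast (Set.range μ) μmin)
    (V V' : Matrix (Fin N) (Fin n) ℝ)
    (hV : V = (Real.sqrt N)⁻¹ •
        (blockD N n k * Matrix.diagonal fun i => (Real.sqrt (μ i))⁻¹))
    (hV' : V' = (Real.sqrt N)⁻¹ •
        (blockD N n k' * Matrix.diagonal fun i => (Real.sqrt (μ' i))⁻¹)) :
    opNorm (V - V') ≤ Real.sqrt (3 * n / μmin) * Real.sqrt ε :=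
  V_perturbation_bound_general N n μ μ' ε εi hεi hμ' k k' hkpos hk'pos hk hk' hksum hk'sum μmin
    hμmin V V' hV hV'
end

section
/- For block indicator matrices D, D' corresponding to block sizes k_i = μ_i N and k'_i = μ'_i N with μ'_i = μ_i(1+ε_i), |ε_i| ≤ ε, the Frobenius norm satisfies ‖D − D'‖_F ≤ √(2εnN). -/
open scoped BigOperators
open Matrix

/-- Frobenius norm of a real matrix. -/
noncomputable def frobNorm {m n : ℕ} (A : Matrix (Fin m) (Fin n) ℝ) : ℝ :=
  Real.sqrt (∑ i, ∑ j, (A i j) ^ 2)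

lemma pt_bound (a b a' b' r : ℕ) :
    ((if a ≤ r ∧ r < b then (1:ℝ) else 0) - (if a' ≤ r ∧ r < b' then (1:ℝ) else 0))^2 ≤
    (if min a a' ≤ r ∧ r < max a a' then (1:ℝ) else 0) +
      (if min b b' ≤ r ∧ r < max b b' then (1:ℝ) else 0) := by
  simp only [Nat.min_def, Nat.max_def]
  split_ifs <;> norm_num <;> omega

lemma cnt_bound (N c d : ℕ) (h : c ≤ d) :
    ∑ r : Fin N, (if c ≤ (r:ℕ) ∧ (r:ℕ) < d then (1:ℝ) else 0) ≤ (d:ℝ) - c := by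
  rw [Fin.sum_univ_eq_sum_range (fun r => if c ≤ r ∧ r < d then (1:ℝ) else 0)]
  have h1 : ∀ r ∈ Finset.range N,
      (if c ≤ r ∧ r < d then (1:ℝ) else 0) = if r ∈ Finset.Ico c d then (1:ℝ) else 0 := by
    intro r _; simp [Finset.mem_Ico]
  rw [Finset.sum_congr rfl h1, Finset.sum_ite_mem, Finset.sum_const, nsmul_eq_mul, mul_one]
  calc ((Finset.range N ∩ Finset.Ico c d).card : ℝ) ≤ ((Finset.Ico c d).card : ℝ) := by
        exact_mod_cast Finset.card_le_card Finset.inter_subset_right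
    _ = (d:ℝ) - c := by rw [Nat.card_Ico, Nat.cast_sub h]

/-- for block indicator matrices `D, D'` with block sizes `k_i = μ_i N` and
`k'_i = μ'_i N`, where `μ'_i = μ_i (1 + ε_i)`, `|ε_i| ≤ ε`, we have
`‖D - D'‖_F ≤ √(2 ε n N)`. -/
theorem blockD_frobenius_perturbation (N n : ℕ) (hN : 0 < N) (hn : 0 < n)
    (μ μ' : Fin n → ℝ) (hμpos : ∀ i, 0 < μ i) (hμ'pos : ∀ i, 0 < μ' i)
    (hμsum : ∑ i, μ i = 1) (hμ'sum : ∑ i, μ' i = 1)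
    (ε : ℝ) (εi : Fin n → ℝ) (hεi : ∀ i, |εi i| ≤ ε)
    (hμ' : ∀ i, μ' i = μ i * (1 + εi i))
    (k k' : Fin n → ℕ) (hkpos : ∀ i, 0 < k i) (hk'pos : ∀ i, 0 < k' i)
    (hk : ∀ i, (k i : ℝ) = μ i * N) (hk' : ∀ i, (k' i : ℝ) = μ' i * N)
    (hksum : ∑ i, k i = N) (hk'sum : ∑ i, k' i = N) :
    frobNorm (blockD N n k - blockD N n k') ≤ Real.sqrt (2 * ε * n * N) := by
  have hε0 : 0 ≤ ε := le_trans (abs_nonneg _) (hεi ⟨0, hn⟩)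
  -- key bound on partial sums of differences
  have key : ∀ s : Finset (Fin n), |∑ i ∈ s, ((k i : ℝ) - k' i)| ≤ ε * N := by
    intro s
    calc |∑ i ∈ s, ((k i : ℝ) - k' i)| ≤ ∑ i ∈ s, |(k i : ℝ) - k' i| :=
          Finset.abs_sum_le_sum_abs _ _
      _ ≤ ∑ i ∈ s, μ i * ε * N := by
          apply Finset.sum_le_sum
          intro i _
          rw [hk, hk', hμ' i]
          have h2 : μ i * N - μ i * (1 + εi i) * N = -(μ i * εi i * N) := by ring
          rw [h2, abs_neg, abs_mul, abs_mul, abs_of_pos (hμpos i),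
            abs_of_nonneg (Nat.cast_nonneg (α := ℝ) N)]
          have hμn : 0 ≤ μ i := (hμpos i).le
          have hNn : (0:ℝ) ≤ N := Nat.cast_nonneg N
          have := mul_le_mul_of_nonneg_right (mul_le_mul_of_nonneg_left (hεi i) hμn) hNn
          linarith
      _ ≤ ∑ i, μ i * ε * N := by
          apply Finset.sum_le_sum_of_subset_of_nonneg (Finset.subset_univ s)
          intro i _ _
          exact mul_nonneg (mul_nonneg (hμpos i).le hε0) (Nat.cast_nonneg N)
      _ = ε * N := by rw [← Finset.sum_mul, ← Finset.sum_mul, hμsum, one_mul]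
  -- partial sums
  set a : Fin n → ℕ := fun j => ∑ i : Fin n, if (i : ℕ) < (j : ℕ) then k i else 0 with ha
  set a' : Fin n → ℕ := fun j => ∑ i : Fin n, if (i : ℕ) < (j : ℕ) then k' i else 0 with ha'
  have hacast : ∀ j, ((a j : ℝ) - a' j) = ∑ i ∈ Finset.univ.filter (fun i : Fin n => (i:ℕ) < (j:ℕ)), ((k i : ℝ) - k' i) := by
    intro j
    simp only [ha, ha']
    push_cast
    rw [← Finset.sum_sub_distrib, Finset.sum_filter]
    exact Finset.sum_congr rfl (fun i _ => by split_ifs <;> simp)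
  have hbcast : ∀ j : Fin n, (((a j + k j : ℕ) : ℝ) - ((a' j + k' j : ℕ) : ℝ))
      = ∑ i ∈ Finset.univ.filter (fun i : Fin n => (i:ℕ) ≤ (j:ℕ)), ((k i : ℝ) - k' i) := by
    intro j
    have hfil : Finset.univ.filter (fun i : Fin n => (i:ℕ) ≤ (j:ℕ))
        = insert j (Finset.univ.filter (fun i : Fin n => (i:ℕ) < (j:ℕ))) := by
      ext i
      simp only [Finset.mem_filter, Finset.mem_univ, true_and, Finset.mem_insert, Fin.ext_iff]
      omega
    rw [hfil, Finset.sum_insert (by simp), ← hacast j]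
    push_cast
    ring
  -- column bound
  have col : ∀ j : Fin n, ∑ r : Fin N, ((blockD N n k - blockD N n k') r j)^2 ≤ 2 * (ε * N) := by
    intro j
    have hentry : ∀ r : Fin N, (blockD N n k - blockD N n k') r j =
        (if a j ≤ (r:ℕ) ∧ (r:ℕ) < a j + k j then (1:ℝ) else 0) -
        (if a' j ≤ (r:ℕ) ∧ (r:ℕ) < a' j + k' j then (1:ℝ) else 0) := by
      intro r
      simp [blockD, Matrix.sub_apply, ha, ha']
    calc ∑ r : Fin N, ((blockD N n k - blockD N n k') r j)^2
        ≤ ∑ r : Fin N, ((if min (a j) (a' j) ≤ (r:ℕ) ∧ (r:ℕ) < max (a j) (a' j) then (1:ℝ) else 0)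
            + (if min (a j + k j) (a' j + k' j) ≤ (r:ℕ) ∧ (r:ℕ) < max (a j + k j) (a' j + k' j) then (1:ℝ) else 0)) := by
          apply Finset.sum_le_sum
          intro r _
          rw [hentry r]
          exact pt_bound _ _ _ _ _
      _ ≤ (((max (a j) (a' j) : ℕ) : ℝ) - ((min (a j) (a' j) : ℕ) : ℝ))
          + (((max (a j + k j) (a' j + k' j) : ℕ) : ℝ) - ((min (a j + k j) (a' j + k' j) : ℕ) : ℝ)) := by
          rw [Finset.sum_add_distrib]
          gcongr ?x + ?y
          · exact cnt_bound N _ _ (min_le_max)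
          · exact cnt_bound N _ _ (min_le_max)
      _ = |(a j : ℝ) - a' j| + |((a j + k j : ℕ) : ℝ) - ((a' j + k' j : ℕ) : ℝ)| := by
          rw [Nat.cast_max, Nat.cast_min, Nat.cast_max, Nat.cast_min,
            max_sub_min_eq_abs, max_sub_min_eq_abs,
            abs_sub_comm ((a' j : ℝ)), abs_sub_comm (((a' j + k' j : ℕ) : ℝ))]
      _ ≤ ε * N + ε * N := by
          gcongr ?x + ?y
          · rw [hacast j]; exact key _
          · rw [hbcast j]; exact key _
      _ = 2 * (ε * N) := by ring
  -- assemble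
  unfold frobNorm
  apply Real.sqrt_le_sqrt
  calc ∑ r : Fin N, ∑ j : Fin n, ((blockD N n k - blockD N n k') r j)^2
      = ∑ j : Fin n, ∑ r : Fin N, ((blockD N n k - blockD N n k') r j)^2 := Finset.sum_comm
    _ ≤ ∑ _j : Fin n, 2 * (ε * N) := Finset.sum_le_sum (fun j _ => col j)
    _ = 2 * ε * n * N := by
        rw [Finset.sum_const, Finset.card_univ, Fintype.card_fin, nsmul_eq_mul]; ring
end
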